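/- arXiv:2407.13375 — 5 statements merged into one kernel-verified Lean document; each statement's English description precedes it below -/
import Mathlib

section
/- Let X be a connected, locally finite, vertex-transitive graph with growth function V, satisfying the Varopoulos inequality |Ω|/φ(2|Ω|) ≤ 4|∂Ω| for all finite vertex sets Ω, where φ(λ) = inf{n : V(n) > λ}. Suppose there exist constants c₁, c₂ > 0 and infinitely many n ∈ ℕ for which there is a finite vertex set Ω with |∂Ω| ≤ c₁·n and V(⌈c₂·n⌉) ≤ |Ω|. Then X does not have growth bounded below by a cubic polynomial: it is false that there exists C > 0 with V(n) ≥ C·n³ for all n ≥ 1. -/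
/-- The exterior vertex boundary of a vertex set: vertices at graph distance exactly 1
from `Ω`. -/
def extBoundary {V : Type*} (G : SimpleGraph V) (Ω : Set V) : Set V :=
  {v | v ∉ Ω ∧ ∃ u ∈ Ω, G.Adj u v}

set_option maxHeartbeats 1000000 in
/-- a connected, locally finite, vertex-transitive graph satisfying the
Varopoulos inequality and admitting arbitrarily large `n` with finite sets `Ω` having
`|∂Ω| ≤ c₁ n` and `V(⌈c₂ n⌉) ≤ |Ω|` cannot have growth bounded below by a cubic. -/
theorem stmt_2 {V : Type*} (G : SimpleGraph V) (hconn : G.Connected)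
    (hlf : G.LocallyFinite)
    (htrans : ∀ u v : V, ∃ e : G ≃g G, e u = v)
    (x₀ : V)
    (Vf : ℕ → ℕ) (hVf : ∀ n, Vf n = {v : V | G.dist x₀ v ≤ n}.ncard)
    (φ : ℕ → ℕ) (hφ : ∀ l, φ l = sInf {n : ℕ | l < Vf n})
    (hVar : ∀ Ω : Set V, Ω.Finite →
      (Ω.ncard : ℝ) / (φ (2 * Ω.ncard) : ℝ) ≤ 4 * ((extBoundary G Ω).ncard : ℝ))
    (c₁ c₂ : ℝ) (hc₁ : 0 < c₁) (hc₂ : 0 < c₂)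
    (hsets : ∀ N : ℕ, ∃ n : ℕ, N ≤ n ∧ ∃ Ω : Set V, Ω.Finite ∧
      ((extBoundary G Ω).ncard : ℝ) ≤ c₁ * n ∧ Vf ⌈c₂ * n⌉₊ ≤ Ω.ncard) :
    ¬ ∃ C : ℝ, 0 < C ∧ ∀ n : ℕ, 1 ≤ n → C * (n : ℝ) ^ 3 ≤ (Vf n : ℝ) := by
  rintro ⟨C, hC, hcubic⟩
  -- constants
  set r₀ : ℝ := (2 / C) ^ ((1:ℝ)/3) with hr₀def
  have hr₀pos : 0 < r₀ := Real.rpow_pos_of_pos (by positivity) _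
  set K : ℝ := 1 + 2 / r₀ with hKdef
  have hKpos : 0 < K := by positivity
  set D : ℝ := (4 * c₁ * K) ^ 3 * (2 / C) with hDdef
  have hDpos : 0 < D := by positivity
  set E : ℝ := C ^ 2 * c₂ ^ 6 with hEdef
  have hEpos : 0 < E := by positivity
  obtain ⟨n, hnN, Ω, hΩfin, hbdry, hVfΩ⟩ := hsets (max 1 (⌈D / E⌉₊ + 1))
  have hn1 : 1 ≤ n := le_trans (le_max_left _ _) hnN
  have hn1r : (1:ℝ) ≤ (n:ℝ) := by exact_mod_cast hn1
  have hnpos : (0:ℝ) < (n:ℝ) := by linarith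
  have hnM : D / E < (n:ℝ) := by
    have h : (⌈D/E⌉₊ + 1 : ℕ) ≤ n := le_trans (le_max_right _ _) hnN
    have h2 : ((⌈D/E⌉₊ + 1 : ℕ) : ℝ) ≤ (n:ℝ) := by exact_mod_cast h
    have h3 : D/E ≤ (⌈D/E⌉₊ : ℝ) := Nat.le_ceil _
    push_cast at h2
    linarith
  -- the set Ω is large
  set k := ⌈c₂ * n⌉₊ with hkdef
  have hk1 : 1 ≤ k := Nat.ceil_pos.mpr (mul_pos hc₂ hnpos)
  have hkreal : c₂ * n ≤ (k:ℝ) := Nat.le_ceil _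
  have hVfk : C * (k:ℝ)^3 ≤ (Vf k : ℝ) := hcubic k hk1
  set a : ℝ := (Ω.ncard : ℝ) with hadef
  have haVf : (Vf k : ℝ) ≤ a := by rw [hadef]; exact_mod_cast hVfΩ
  have halow : C * (c₂ * n)^3 ≤ a := by
    have h0 : 0 ≤ c₂ * n := le_of_lt (mul_pos hc₂ hnpos)
    have h1 : (c₂*n)^3 ≤ (k:ℝ)^3 := pow_le_pow_left₀ h0 hkreal 3
    nlinarith
  have hVfkpos : 1 ≤ Vf k := by
    have h1 : (0:ℝ) < (Vf k : ℝ) := lt_of_lt_of_le (by positivity) hVfk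
    exact_mod_cast h1
  have ha1 : (1:ℝ) ≤ a := by
    have h : 1 ≤ Ω.ncard := le_trans hVfkpos hVfΩ
    rw [hadef]; exact_mod_cast h
  have ha0 : (0:ℝ) < a := by linarith
  -- the cube-root quantity r and the witness m for φ
  set r : ℝ := (2 * a / C) ^ ((1:ℝ)/3) with hrdef
  have hrnn : 0 ≤ r := Real.rpow_nonneg (by positivity) _
  have hr3 : r ^ 3 = 2 * a / C := by
    rw [hrdef, ← Real.rpow_natCast ((2*a/C) ^ ((1:ℝ)/3)) 3,
      ← Real.rpow_mul (by positivity)]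
    norm_num
  set m := ⌈r⌉₊ + 1 with hmdef
  have hm1 : 1 ≤ m := Nat.le_add_left _ _
  have hmr : r < (m:ℝ) := by
    have h := Nat.le_ceil r
    have : ((⌈r⌉₊ + 1 : ℕ) : ℝ) = (⌈r⌉₊ : ℝ) + 1 := by push_cast; ring
    rw [hmdef, this]
    linarith
  have hmub : (m:ℝ) ≤ r + 2 := by
    have h := Nat.ceil_lt_add_one hrnn
    have : ((⌈r⌉₊ + 1 : ℕ) : ℝ) = (⌈r⌉₊ : ℝ) + 1 := by push_cast; ring
    rw [hmdef, this]
    linarith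
  have hVfm : 2 * Ω.ncard < Vf m := by
    have h1 : C * (m:ℝ)^3 ≤ (Vf m : ℝ) := hcubic m hm1
    have h2 : r^3 < (m:ℝ)^3 := pow_lt_pow_left₀ hmr hrnn (by norm_num)
    rw [hr3] at h2
    have h3 := (div_lt_iff₀ hC).mp h2
    have h4 : (2 * Ω.ncard : ℝ) < (Vf m : ℝ) := by
      push_cast
      nlinarith
    exact_mod_cast h4
  have hmem : m ∈ {j : ℕ | 2 * Ω.ncard < Vf j} := hVfm
  have hφle : φ (2 * Ω.ncard) ≤ m := by rw [hφ]; exact Nat.sInf_le hmem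
  -- φ is positive, since Vf 0 = 1 ≤ 2|Ω|
  have hVf0 : Vf 0 = 1 := by
    rw [hVf]
    have hset : {v : V | G.dist x₀ v ≤ 0} = {x₀} := by
      ext v
      simp only [Set.mem_setOf_eq, Nat.le_zero, Set.mem_singleton_iff]
      constructor
      · intro h
        rcases SimpleGraph.dist_eq_zero_iff_eq_or_not_reachable.mp h with h | h
        · exact h.symm
        · exact absurd (hconn.preconnected x₀ v) h
      · rintro rfl; simp
    rw [hset, Set.ncard_singleton]
  have hφpos : 0 < φ (2 * Ω.ncard) := by
    rw [hφ]
    rcases Nat.eq_zero_or_pos (sInf {j : ℕ | 2 * Ω.ncard < Vf j}) with h0 | h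
    · exfalso
      have hmem0 : 0 ∈ {j : ℕ | 2 * Ω.ncard < Vf j} := by
        rw [← h0]; exact Nat.sInf_mem ⟨m, hmem⟩
      have : 2 * Ω.ncard < Vf 0 := hmem0
      have hA1 : 1 ≤ Ω.ncard := le_trans hVfkpos hVfΩ
      omega
    · exact h
  -- Varopoulos chain
  have hvar := hVar Ω hΩfin
  have h1 : a / (φ (2 * Ω.ncard) : ℝ) ≤ 4 * (c₁ * n) := le_trans hvar (by linarith)
  have hφm : ((φ (2 * Ω.ncard) : ℕ) : ℝ) ≤ (m:ℝ) := by exact_mod_cast hφle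
  have hφr : (0:ℝ) < ((φ (2 * Ω.ncard) : ℕ) : ℝ) := by exact_mod_cast hφpos
  have hmpos : (0:ℝ) < (m:ℝ) := by exact_mod_cast hm1
  have h2 : a / (m:ℝ) ≤ a / ((φ (2 * Ω.ncard) : ℕ) : ℝ) :=
    div_le_div_of_nonneg_left (by linarith) hφr hφm
  have h3 : a ≤ 4 * (c₁ * n) * (m:ℝ) := by
    have h := le_trans h2 h1
    rw [div_le_iff₀ hmpos] at h
    exact h
  -- bound m by K * r
  have hrr₀ : r₀ ≤ r := by
    rw [hr₀def, hrdef]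
    apply Real.rpow_le_rpow (by positivity) _ (by norm_num)
    exact (div_le_div_iff_of_pos_right hC).mpr (by linarith)
  have hr2K : r + 2 ≤ K * r := by
    have hh : (2/r₀) * r₀ ≤ (2/r₀) * r := by
      apply mul_le_mul_of_nonneg_left hrr₀ (by positivity)
    have he : (2/r₀) * r₀ = 2 := div_mul_cancel₀ 2 hr₀pos.ne'
    calc r + 2 ≤ r + (2/r₀)*r := by linarith
      _ = K * r := by rw [hKdef]; ring
  have h5 : a ≤ 4 * (c₁ * n) * (K * r) := by
    have hc : (0:ℝ) ≤ 4 * (c₁ * n) := by positivity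
    calc a ≤ 4*(c₁*n)*(m:ℝ) := h3
      _ ≤ 4*(c₁*n)*(r+2) := mul_le_mul_of_nonneg_left hmub hc
      _ ≤ 4*(c₁*n)*(K*r) := mul_le_mul_of_nonneg_left hr2K hc
  -- cube it
  have h6 : a^3 ≤ (4*(c₁*(n:ℝ))*K)^3 * (2*a/C) := by
    calc a^3 ≤ (4*(c₁*n)*(K*r))^3 := pow_le_pow_left₀ (le_of_lt ha0) h5 3
      _ = (4*(c₁*n)*K)^3 * r^3 := by ring
      _ = (4*(c₁*n)*K)^3 * (2*a/C) := by rw [hr3]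
  have h7 : a^2 ≤ D * (n:ℝ)^3 := by
    have hEq : (4*(c₁*(n:ℝ))*K)^3 * (2*a/C) = (D * (n:ℝ)^3) * a := by
      rw [hDdef]; ring
    rw [hEq] at h6
    have h8 : a^2 * a ≤ (D * (n:ℝ)^3) * a := by nlinarith
    exact le_of_mul_le_mul_right h8 ha0
  have h9 : E * (n:ℝ)^6 ≤ a^2 := by
    have hnn : (0:ℝ) ≤ C * (c₂*n)^3 := by positivity
    have := pow_le_pow_left₀ hnn halow 2
    calc E * (n:ℝ)^6 = (C*(c₂*(n:ℝ))^3)^2 := by rw [hEdef]; ring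
      _ ≤ a^2 := this
  have hn3 : (0:ℝ) < (n:ℝ)^3 := by positivity
  have h10 : E * (n:ℝ)^3 ≤ D := by
    have h11 : (E*(n:ℝ)^3)*(n:ℝ)^3 ≤ D*(n:ℝ)^3 := by nlinarith
    exact le_of_mul_le_mul_right h11 hn3
  have hnn3 : (n:ℝ) ≤ (n:ℝ)^3 := le_self_pow₀ hn1r (by norm_num)
  have h12 : E * (n:ℝ) ≤ D := by
    have := mul_le_mul_of_nonneg_left hnn3 hEpos.le
    linarith
  have h13 : (n:ℝ) ≤ D / E := (le_div_iff₀ hEpos).mpr (by linarith)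
  linarith
end

section
/- Let X be a connected, locally finite graph and let N be a group acting on X by graph automorphisms with uniformly bounded orbits: there exists R ≥ 0 such that for every vertex v, the orbit N·v has diameter at most R in the path metric of X. Then the quotient map π : X → X/N to the quotient graph is a quasi-isometry, where X/N carries its path metric. -/
/-!
Walks push forward along `π` without getting longer, so `π` is 1-Lipschitz and onto.
Conversely, every edge of `X/N` lifts to an edge of `X` between representatives, and
consecutive lifts lie in a common orbit, hence are at most `R` apart; so a walk of length
`n` in `X/N` lifts to a path of length at most `(R + 1) n + R` in `X`.
-/

/-- The quotient graph of a graph by a group action on the vertices: vertices are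
the orbits, and two distinct orbits are adjacent when they contain adjacent
representatives. -/
def quotientGraph {V : Type*} (G : SimpleGraph V) (N : Type*) [Group N] [MulAction N V] :
    SimpleGraph (Quotient (MulAction.orbitRel N V)) where
  Adj x y := x ≠ y ∧ ∃ u v : V, Quotient.mk (MulAction.orbitRel N V) u = x ∧
    Quotient.mk (MulAction.orbitRel N V) v = y ∧ G.Adj u v
  symm := by
    constructor
    rintro x y ⟨hne, u, v, hu, hv, h⟩
    exact ⟨hne.symm, v, u, hv, hu, h.symm⟩
  loopless := by
    constructor
    rintro x ⟨hne, -⟩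
    exact hne rfl

namespace SimpleGraph

variable {V W : Type*} {G : SimpleGraph V} {H : SimpleGraph W} {f : V → W}

lemma exists_walk_apply_length_le (hf : ∀ a b, G.Adj a b → f a = f b ∨ H.Adj (f a) (f b))
    {u v : V} (p : G.Walk u v) : ∃ q : H.Walk (f u) (f v), q.length ≤ p.length := by
  induction p with
  | nil => exact ⟨.nil, le_rfl⟩
  | @cons a b c hab p ih =>
    obtain ⟨q, hq⟩ := ih
    rcases hf a b hab with heq | hadj
    · exact ⟨q.copy heq.symm rfl, by rw [Walk.length_copy, Walk.length_cons]; omega⟩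
    · exact ⟨.cons hadj q, by simpa using hq⟩

lemma Connected.reachable_apply_and_dist_apply_le (hG : G.Connected)
    (hf : ∀ a b, G.Adj a b → f a = f b ∨ H.Adj (f a) (f b)) (u v : V) :
    H.Reachable (f u) (f v) ∧ H.dist (f u) (f v) ≤ G.dist u v := by
  obtain ⟨p, hp⟩ := hG.exists_walk_length_eq_dist u v
  obtain ⟨q, hq⟩ := exists_walk_apply_length_le hf p
  exact ⟨⟨q⟩, (dist_le q).trans (hp ▸ hq)⟩

lemma Connected.dist_le_of_walk_of_lift (hG : G.Connected) {R : ℕ}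
    (hfiber : ∀ a b, f a = f b → G.dist a b ≤ R)
    (hlift : ∀ x y, H.Adj x y → ∃ a b, f a = x ∧ f b = y ∧ G.Adj a b)
    {x y : W} (q : H.Walk x y) {u v : V} (hu : f u = x) (hv : f v = y) :
    G.dist u v ≤ (R + 1) * q.length + R := by
  induction q generalizing u with
  | nil => simpa using hfiber u v (hu.trans hv.symm)
  | cons hxz q ih =>
    obtain ⟨a, b, ha, hb, hab⟩ := hlift _ _ hxz
    calc G.dist u v ≤ G.dist u a + (G.dist a b + G.dist b v) :=
          hG.dist_triangle.trans (Nat.add_le_add_left hG.dist_triangle _)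
      _ ≤ R + (1 + ((R + 1) * q.length + R)) :=
          Nat.add_le_add (hfiber u a (hu.trans ha.symm))
            (Nat.add_le_add (dist_le hab.toWalk) (ih hb hv))
      _ = (R + 1) * (q.length + 1) + R := by ring

end SimpleGraph

section QuotientGraph

variable {V : Type*} {G : SimpleGraph V} {N : Type*} [Group N] [MulAction N V]

local notation "π" => Quotient.mk (MulAction.orbitRel N V)

lemma quotientGraph_eq_or_adj_of_adj {u v : V} (h : G.Adj u v) :
    π u = π v ∨ (quotientGraph G N).Adj (π u) (π v) := by
  by_cases heq : π u = π v
  · exact .inl heq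
  · exact .inr ⟨heq, u, v, rfl, rfl, h⟩

lemma dist_le_of_orbit_dist_le {R : ℕ}
    (horb : ∀ (v : V) (g h : N), G.dist (g • v) (h • v) ≤ R) {u v : V} (h : π u = π v) : G.dist u v ≤ R := by
  obtain ⟨g, rfl⟩ := Quotient.exact h
  simpa using horb v g 1

end QuotientGraph

theorem stmt_4_general {V : Type*} (G : SimpleGraph V) (hconn : G.Connected)
    (N : Type*) [Group N] [MulAction N V]
    (R : ℕ) (horb : ∀ (v : V) (g h : N), G.dist (g • v) (h • v) ≤ R) :
    ∃ l e : ℝ, 1 ≤ l ∧ 0 ≤ e ∧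
      (∀ u v : V,
        (1 / l) * (G.dist u v : ℝ) - e ≤
          ((quotientGraph G N).dist (Quotient.mk (MulAction.orbitRel N V) u)
            (Quotient.mk (MulAction.orbitRel N V) v) : ℝ) ∧
        ((quotientGraph G N).dist (Quotient.mk (MulAction.orbitRel N V) u)
            (Quotient.mk (MulAction.orbitRel N V) v) : ℝ) ≤
          l * (G.dist u v : ℝ) + e) ∧
      (∀ x : Quotient (MulAction.orbitRel N V), ∃ u : V,
        ((quotientGraph G N).dist x (Quotient.mk (MulAction.orbitRel N V) u) : ℝ) ≤ e) := by
  refine ⟨R + 1, R, by simp, by positivity, fun u v => ?_, fun x => ⟨x.out, by simp⟩⟩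
  obtain ⟨hreach, hupper⟩ :=
    hconn.reachable_apply_and_dist_apply_le (fun _ _ => quotientGraph_eq_or_adj_of_adj (N := N)) u v
  obtain ⟨q, hq⟩ := hreach.exists_walk_length_eq_dist
  have hlower := hconn.dist_le_of_walk_of_lift (fun _ _ => dist_le_of_orbit_dist_le horb)
    (fun _ _ (hxy : (quotientGraph G N).Adj _ _) => hxy.2) q rfl rfl
  rw [hq] at hlower
  generalize G.dist u v = D at *
  generalize (quotientGraph G N).dist _ _ = d at *
  have hupper' : (d : ℝ) ≤ D := by exact_mod_cast hupper
  have hlower' : (D : ℝ) ≤ (R + 1) * d + R := by exact_mod_cast hlower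
  have hR : (0 : ℝ) ≤ R := R.cast_nonneg
  constructor
  · rw [one_div_mul_eq_div, sub_le_iff_le_add, div_le_iff₀ (by positivity)]
    nlinarith
  · nlinarith

/-- if a group `N` acts by automorphisms on a connected locally finite
graph with uniformly bounded orbits, then the quotient map to the quotient graph is
a quasi-isometry (with respect to the path metrics). -/
theorem stmt_4 {V : Type*} (G : SimpleGraph V) (hconn : G.Connected)
    (hlf : G.LocallyFinite)
    (N : Type*) [Group N] [MulAction N V]
    (hact : ∀ (g : N) (u v : V), G.Adj u v → G.Adj (g • u) (g • v))
    (R : ℕ) (horb : ∀ (v : V) (g h : N), G.dist (g • v) (h • v) ≤ R) :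
    ∃ l e : ℝ, 1 ≤ l ∧ 0 ≤ e ∧
      (∀ u v : V,
        (1 / l) * (G.dist u v : ℝ) - e ≤
          ((quotientGraph G N).dist (Quotient.mk (MulAction.orbitRel N V) u)
            (Quotient.mk (MulAction.orbitRel N V) v) : ℝ) ∧
        ((quotientGraph G N).dist (Quotient.mk (MulAction.orbitRel N V) u)
            (Quotient.mk (MulAction.orbitRel N V) v) : ℝ) ≤
          l * (G.dist u v : ℝ) + e) ∧
      (∀ x : Quotient (MulAction.orbitRel N V), ∃ u : V,
        ((quotientGraph G N).dist x (Quotient.mk (MulAction.orbitRel N V) u) : ℝ) ≤ e) :=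
  stmt_4_general G hconn N R horb
end

section
/- Let X be a connected graph on which a group N acts by automorphisms with uniformly bounded orbits. Then for any two vertices u, v of X, the distance in the quotient graph X/N between the orbits N·u and N·v satisfies d(u,v) − 2R ≤ (R+1)·d_{X/N}(N·u, N·v) and d_{X/N}(N·u, N·v) ≤ d(u,v), where R bounds the diameter of every orbit. -/
namespace SimpleGraph

variable {V W : Type*} {G : SimpleGraph V} {H : SimpleGraph W}

lemma Walk.exists_walk_length_le_of_adj_imp (f : V → W)
    (hf : ∀ ⦃a b⦄, G.Adj a b → f a ≠ f b → H.Adj (f a) (f b)) {u v : V} (p : G.Walk u v) :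
    ∃ q : H.Walk (f u) (f v), q.length ≤ p.length := by
  induction p with
  | nil => exact ⟨nil, le_rfl⟩
  | @cons a b c hab p ih =>
    obtain ⟨q, hq⟩ := ih
    by_cases hfab : f a = f b
    · exact ⟨q.copy hfab.symm rfl, by simp only [length_copy, length_cons]; omega⟩
    · exact ⟨cons (hf hab hfab) q, by simpa using hq⟩

lemma Reachable.of_adj_imp (f : V → W)
    (hf : ∀ ⦃a b⦄, G.Adj a b → f a ≠ f b → H.Adj (f a) (f b)) {u v : V} (h : G.Reachable u v) :
    H.Reachable (f u) (f v) :=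
  let ⟨p⟩ := h
  ⟨(p.exists_walk_length_le_of_adj_imp f hf).choose⟩

lemma Reachable.dist_le_of_adj_imp (f : V → W)
    (hf : ∀ ⦃a b⦄, G.Adj a b → f a ≠ f b → H.Adj (f a) (f b)) {u v : V} (h : G.Reachable u v) :
    H.dist (f u) (f v) ≤ G.dist u v := by
  obtain ⟨p, hp⟩ := h.exists_walk_length_eq_dist
  obtain ⟨q, hq⟩ := p.exists_walk_length_le_of_adj_imp f hf
  exact (dist_le q).trans (hq.trans hp.le)

lemma Connected.dist_le_of_walk (hG : G.Connected) (f : V → W) (R : ℕ)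
    (hfib : ∀ ⦃a b⦄, f a = f b → G.dist a b ≤ R)
    (hlift : ∀ ⦃x y⦄, H.Adj x y → ∃ a b, f a = x ∧ f b = y ∧ G.Adj a b) {x y : W}
    (q : H.Walk x y) {u v : V} (hu : f u = x) (hv : f v = y) :
    G.dist u v ≤ (R + 1) * q.length + R := by
  induction q generalizing u with
  | nil => simpa using hfib (hu.trans hv.symm)
  | @cons x x' y hxx' q ih =>
    obtain ⟨a, b, ha, hb, hab⟩ := hlift hxx'
    calc G.dist u v ≤ G.dist u a + (G.dist a b + G.dist b v) :=
          hG.dist_triangle.trans (Nat.add_le_add_left hG.dist_triangle _)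
      _ ≤ R + (1 + ((R + 1) * q.length + R)) :=
          Nat.add_le_add (hfib (hu.trans ha.symm))
            (Nat.add_le_add (dist_eq_one_iff_adj.mpr hab).le (ih hb hv))
      _ = (R + 1) * (Walk.cons hxx' q).length + R := by rw [Walk.length_cons]; ring

lemma Connected.dist_le_mul_dist_add (hG : G.Connected) (f : V → W) (R : ℕ)
    (hfib : ∀ ⦃a b⦄, f a = f b → G.dist a b ≤ R)
    (hlift : ∀ ⦃x y⦄, H.Adj x y → ∃ a b, f a = x ∧ f b = y ∧ G.Adj a b) {u v : V}
    (h : H.Reachable (f u) (f v)) :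
    G.dist u v ≤ (R + 1) * H.dist (f u) (f v) + R := by
  obtain ⟨q, hq⟩ := h.exists_walk_length_eq_dist
  simpa [hq] using hG.dist_le_of_walk f R hfib hlift q rfl rfl

end SimpleGraph

section QuotientGraph

variable {V : Type*} (G : SimpleGraph V) (N : Type*) [Group N] [MulAction N V]

lemma quotientGraph_adj_mk_of_adj ⦃a b : V⦄ (hab : G.Adj a b)
    (hne : Quotient.mk (MulAction.orbitRel N V) a ≠ Quotient.mk (MulAction.orbitRel N V) b) :
    (quotientGraph G N).Adj (Quotient.mk _ a) (Quotient.mk _ b) :=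
  ⟨hne, a, b, rfl, rfl, hab⟩

lemma quotientGraph_adj_exists_lift ⦃x y : Quotient (MulAction.orbitRel N V)⦄
    (h : (quotientGraph G N).Adj x y) :
    ∃ a b, Quotient.mk (MulAction.orbitRel N V) a = x ∧
      Quotient.mk (MulAction.orbitRel N V) b = y ∧ G.Adj a b :=
  h.2

variable {G N}

lemma dist_le_of_mk_eq {R : ℕ} (horb : ∀ (v : V) (g h : N), G.dist (g • v) (h • v) ≤ R)
    ⦃a b : V⦄ (h : Quotient.mk (MulAction.orbitRel N V) a = Quotient.mk _ b) :
    G.dist a b ≤ R := by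
  obtain ⟨g, rfl⟩ := Quotient.exact h
  simpa using horb b g 1

end QuotientGraph

theorem stmt_5_general {V : Type*} (G : SimpleGraph V) (hconn : G.Connected)
    (N : Type*) [Group N] [MulAction N V]
    (R : ℕ) (horb : ∀ (v : V) (g h : N), G.dist (g • v) (h • v) ≤ R) :
    ∀ u v : V,
      (G.dist u v : ℤ) - 2 * R ≤ (R + 1) *
        ((quotientGraph G N).dist (Quotient.mk (MulAction.orbitRel N V) u)
          (Quotient.mk (MulAction.orbitRel N V) v) : ℤ) ∧
      (quotientGraph G N).dist (Quotient.mk (MulAction.orbitRel N V) u)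
          (Quotient.mk (MulAction.orbitRel N V) v) ≤ G.dist u v := by
  intro u v
  have hproj := quotientGraph_adj_mk_of_adj G N
  have hupper := (hconn u v).dist_le_of_adj_imp _ hproj
  have hlower := hconn.dist_le_mul_dist_add _ R (dist_le_of_mk_eq horb)
    (quotientGraph_adj_exists_lift G N) ((hconn u v).of_adj_imp _ hproj)
  refine ⟨?_, hupper⟩
  zify at hlower
  linarith

/-- if `N` acts on a connected graph `X` by automorphisms with all orbits of
diameter at most `R`, then for all vertices `u, v` we have
`d(u,v) - 2R ≤ (R+1) · d_{X/N}(N·u, N·v)` and `d_{X/N}(N·u, N·v) ≤ d(u,v)`. -/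
theorem stmt_5 {V : Type*} (G : SimpleGraph V) (hconn : G.Connected)
    (N : Type*) [Group N] [MulAction N V]
    (hact : ∀ (g : N) (u v : V), G.Adj u v → G.Adj (g • u) (g • v))
    (R : ℕ) (horb : ∀ (v : V) (g h : N), G.dist (g • v) (h • v) ≤ R) :
    ∀ u v : V,
      (G.dist u v : ℤ) - 2 * R ≤ (R + 1) *
        ((quotientGraph G N).dist (Quotient.mk (MulAction.orbitRel N V) u)
          (Quotient.mk (MulAction.orbitRel N V) v) : ℤ) ∧
      (quotientGraph G N).dist (Quotient.mk (MulAction.orbitRel N V) u)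
          (Quotient.mk (MulAction.orbitRel N V) v) ≤ G.dist u v :=
  stmt_5_general G hconn N R horb
end

section
/- Let Γ be a connected, locally finite graph and G a group acting on Γ by automorphisms, properly discontinuously and cocompactly (finitely many orbits of vertices). Then G is finitely generated and, for any choice of base vertex v₀, the orbit map g ↦ g·v₀ is a quasi-isometry from G (with a word metric for some finite generating set) to Γ with its path metric. -/
/-!
Fix a base vertex `b`. Cocompactness gives `D` with every vertex within `D` of the orbit `G • b`,
and `S := {s | d(b, s • b) ≤ 2D + 1}` is finite by proper discontinuity. Shadowing a geodesic of `Γ`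
from `g • b` to `h • b` by orbit points, consecutive shadows are `2D + 1`-close, so they differ by
an element of `S`: this gives a Cayley walk from `g` to `h`, hence `S` generates `G` and the word
distance is at most `d(g • b, h • b) + 1`. Conversely each letter of `S` moves the orbit point by at
most `2D + 1`. Changing the base vertex to `v₀` costs an additive `2 d(b, v₀)`.
-/

/-- The Cayley graph of a group with respect to a finite set `S` of generators
(symmetrised); its path metric is the word metric. -/
def cayleyGraph (G : Type*) [Group G] (S : Finset G) : SimpleGraph G where
  Adj g h := g ≠ h ∧ (g⁻¹ * h ∈ S ∨ h⁻¹ * g ∈ S)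
  symm := by
    constructor
    rintro g h ⟨hne, hs⟩
    exact ⟨hne.symm, hs.symm⟩
  loopless := by
    constructor
    rintro g ⟨hne, -⟩
    exact hne rfl

open SimpleGraph

section CayleyGraph

variable {G : Type*} [Group G] {S : Finset G}

theorem cayleyGraph_adj_of_mem {g h : G} (hne : g ≠ h) (hs : g⁻¹ * h ∈ S) :
    (cayleyGraph G S).Adj g h :=
  ⟨hne, .inl hs⟩

theorem inv_mul_mem_closure_of_reachable {g h : G} (hr : (cayleyGraph G S).Reachable g h) :
    g⁻¹ * h ∈ Subgroup.closure (S : Set G) := by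
  obtain ⟨q⟩ := hr
  induction q with
  | nil => simp
  | @cons g x h hadj _ ih =>
    have hstep : g⁻¹ * x ∈ Subgroup.closure (S : Set G) := by
      rcases hadj.2 with hs | hs
      · exact Subgroup.subset_closure hs
      · simpa using Subgroup.inv_mem _ (Subgroup.subset_closure hs)
    simpa [mul_assoc] using Subgroup.mul_mem _ hstep ih

theorem closure_eq_top_of_connected_cayleyGraph (h : (cayleyGraph G S).Connected) :
    Subgroup.closure (S : Set G) = ⊤ :=
  eq_top_iff.2 fun g _ => by simpa using inv_mul_mem_closure_of_reachable (h 1 g)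

end CayleyGraph

namespace SimpleGraph.Connected

variable {V : Type*} {Γ : SimpleGraph V} {G : Type*} [Group G] [MulAction G V]

protected theorem dist_smul_le (hconn : Γ.Connected)
    (hact : ∀ (g : G) (u v : V), Γ.Adj u v → Γ.Adj (g • u) (g • v)) (g : G) (u v : V) :
    Γ.dist (g • u) (g • v) ≤ Γ.dist u v := by
  obtain ⟨p, hp⟩ := hconn.exists_walk_length_eq_dist u v
  simpa [hp] using dist_le (p.map (⟨(g • ·), hact g _ _⟩ : Γ →g Γ))

protected theorem dist_smul (hconn : Γ.Connected)
    (hact : ∀ (g : G) (u v : V), Γ.Adj u v → Γ.Adj (g • u) (g • v)) (g : G) (u v : V) :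
    Γ.dist (g • u) (g • v) = Γ.dist u v :=
  (hconn.dist_smul_le hact g u v).antisymm <| by
    simpa using hconn.dist_smul_le hact g⁻¹ (g • u) (g • v)

theorem dist_smul_smul_eq_dist_inv_mul_smul (hconn : Γ.Connected)
    (hact : ∀ (g : G) (u v : V), Γ.Adj u v → Γ.Adj (g • u) (g • v)) (g h : G) (b : V) :
    Γ.dist (g • b) (h • b) = Γ.dist b ((g⁻¹ * h) • b) := by
  rw [← hconn.dist_smul hact g b, smul_smul, mul_inv_cancel_left]

theorem dist_smul_smul_le_add (hconn : Γ.Connected)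
    (hact : ∀ (g : G) (u v : V), Γ.Adj u v → Γ.Adj (g • u) (g • v)) (g h : G) (v w : V) :
    Γ.dist (g • v) (h • v) ≤ Γ.dist (g • w) (h • w) + 2 * Γ.dist v w := by
  have hg := hconn.dist_smul hact g v w
  have hh := hconn.dist_smul hact h w v
  have h₁ := hconn.dist_triangle (u := g • v) (v := g • w) (w := h • v)
  have h₂ := hconn.dist_triangle (u := g • w) (v := h • w) (w := h • v)
  rw [dist_comm (u := w)] at hh
  omega

theorem exists_dist_smul_le_of_finite_orbits (hconn : Γ.Connected)
    (hact : ∀ (g : G) (u v : V), Γ.Adj u v → Γ.Adj (g • u) (g • v))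
    (hfin : Finite (Quotient (MulAction.orbitRel G V))) (b : V) :
    ∃ D : ℕ, ∀ v : V, ∃ g : G, Γ.dist v (g • b) ≤ D := by
  obtain ⟨D, hD⟩ :=
    (Set.finite_range fun q : Quotient (MulAction.orbitRel G V) => Γ.dist q.out b).bddAbove
  refine ⟨D, fun v => ?_⟩
  obtain ⟨g, hg⟩ := Quotient.mk_out (s := MulAction.orbitRel G V) v
  refine ⟨g⁻¹, ?_⟩
  rw [← hconn.dist_smul hact g, smul_inv_smul, show g • v = _ from hg]
  exact hD ⟨_, rfl⟩

theorem exists_cayleyGraph_walk_length_le_one (hconn : Γ.Connected)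
    (hact : ∀ (g : G) (u v : V), Γ.Adj u v → Γ.Adj (g • u) (g • v)) {S : Finset G} {b : V}
    {R : ℕ} (hS : ∀ g : G, Γ.dist b (g • b) ≤ R → g ∈ S) {g h : G}
    (hgh : Γ.dist (g • b) (h • b) ≤ R) : ∃ q : (cayleyGraph G S).Walk g h, q.length ≤ 1 := by
  by_cases hne : g = h
  · subst hne
    exact ⟨.nil, zero_le_one⟩
  · refine ⟨(cayleyGraph_adj_of_mem hne (hS _ ?_)).toWalk, by simp⟩
    rwa [← hconn.dist_smul_smul_eq_dist_inv_mul_smul hact]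

theorem exists_cayleyGraph_walk_of_walk (hconn : Γ.Connected)
    (hact : ∀ (g : G) (u v : V), Γ.Adj u v → Γ.Adj (g • u) (g • v)) {S : Finset G} {b : V}
    {D : ℕ} (hS : ∀ g : G, Γ.dist b (g • b) ≤ 2 * D + 1 → g ∈ S)
    (hD : ∀ v : V, ∃ g : G, Γ.dist v (g • b) ≤ D) {u w : V} (p : Γ.Walk u w) {gu gw : G}
    (hu : Γ.dist u (gu • b) ≤ D) (hw : Γ.dist w (gw • b) ≤ D) :
    ∃ q : (cayleyGraph G S).Walk gu gw, q.length ≤ p.length + 1 := by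
  induction p generalizing gu with
  | @nil z =>
    have := hconn.dist_triangle (u := gu • b) (v := z) (w := gw • b)
    rw [dist_comm] at hu
    simpa using hconn.exists_cayleyGraph_walk_length_le_one hact hS (by omega)
  | @cons u x w hadj p ih =>
    obtain ⟨gx, hx⟩ := hD x
    obtain ⟨q, hq⟩ := ih hx hw
    have hux : Γ.dist u x = 1 := dist_eq_one_iff_adj.2 hadj
    have h₁ := hconn.dist_triangle (u := gu • b) (v := u) (w := gx • b)
    have h₂ := hconn.dist_triangle (u := u) (v := x) (w := gx • b)
    rw [dist_comm] at hu
    obtain ⟨q₀, hq₀⟩ := hconn.exists_cayleyGraph_walk_length_le_one hact hS (g := gu) (h := gx)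
      (by omega)
    exact ⟨q₀.append q, by rw [Walk.length_append, Walk.length_cons]; omega⟩

theorem dist_smul_smul_le_mul_length (hconn : Γ.Connected)
    (hact : ∀ (g : G) (u v : V), Γ.Adj u v → Γ.Adj (g • u) (g • v)) {S : Finset G} {b : V}
    {R : ℕ} (hS : ∀ s ∈ S, Γ.dist b (s • b) ≤ R) {g h : G} (q : (cayleyGraph G S).Walk g h) :
    Γ.dist (g • b) (h • b) ≤ R * q.length := by
  induction q with
  | nil => simp
  | @cons g x h hadj q ih =>
    have hstep : Γ.dist (g • b) (x • b) ≤ R := by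
      rcases hadj.2 with hs | hs
      · rw [hconn.dist_smul_smul_eq_dist_inv_mul_smul hact]
        exact hS _ hs
      · rw [dist_comm, hconn.dist_smul_smul_eq_dist_inv_mul_smul hact]
        exact hS _ hs
    have := hconn.dist_triangle (u := g • b) (v := x • b) (w := h • b)
    rw [Walk.length_cons, mul_add_one]
    omega

theorem exists_cayleyGraph_orbit_bounds (hconn : Γ.Connected)
    (hact : ∀ (g : G) (u v : V), Γ.Adj u v → Γ.Adj (g • u) (g • v))
    (hpd : ∀ (v : V) (r : ℕ), {g : G | Γ.dist v (g • v) ≤ r}.Finite)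
    (hfin : Finite (Quotient (MulAction.orbitRel G V))) (b : V) :
    ∃ (S : Finset G) (D : ℕ), (cayleyGraph G S).Connected ∧
      (∀ g h : G, (cayleyGraph G S).dist g h ≤ Γ.dist (g • b) (h • b) + 1) ∧
      (∀ g h : G, Γ.dist (g • b) (h • b) ≤ (2 * D + 1) * (cayleyGraph G S).dist g h) ∧
      ∀ v : V, ∃ g : G, Γ.dist v (g • b) ≤ D := by
  obtain ⟨D, hD⟩ := hconn.exists_dist_smul_le_of_finite_orbits hact hfin b
  set S := (hpd b (2 * D + 1)).toFinset
  have hS (g : G) : g ∈ S ↔ Γ.dist b (g • b) ≤ 2 * D + 1 := Set.Finite.mem_toFinset _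
  have hwalk (g h : G) :
      ∃ q : (cayleyGraph G S).Walk g h, q.length ≤ Γ.dist (g • b) (h • b) + 1 := by
    obtain ⟨p, hp⟩ := hconn.exists_walk_length_eq_dist (g • b) (h • b)
    rw [← hp]
    exact hconn.exists_cayleyGraph_walk_of_walk hact (fun g => (hS g).2) hD p (by simp) (by simp)
  have hcay : (cayleyGraph G S).Connected :=
    { preconnected := fun g h => (hwalk g h).elim fun q _ => ⟨q⟩
      nonempty := ⟨1⟩ }
  refine ⟨S, D, hcay, fun g h => ?_, fun g h => ?_, hD⟩
  · obtain ⟨q, hq⟩ := hwalk g h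
    exact (dist_le q).trans hq
  · obtain ⟨q, hq⟩ := hcay.exists_walk_length_eq_dist g h
    rw [← hq]
    exact hconn.dist_smul_smul_le_mul_length hact (fun s hs => (hS s).1 hs) q

end SimpleGraph.Connected

theorem stmt_8_general {V : Type*} (Γ : SimpleGraph V) (hconn : Γ.Connected)
    (G : Type*) [Group G] [MulAction G V]
    (hact : ∀ (g : G) (u v : V), Γ.Adj u v → Γ.Adj (g • u) (g • v))
    (hpd : ∀ (v : V) (r : ℕ), {g : G | Γ.dist v (g • v) ≤ r}.Finite)
    (hcocompact : Finite (Quotient (MulAction.orbitRel G V))) :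
    ∃ S : Finset G, Subgroup.closure (S : Set G) = ⊤ ∧
      ∀ v₀ : V, ∃ l e : ℝ, 1 ≤ l ∧ 0 ≤ e ∧
        (∀ g h : G,
          (1 / l) * ((cayleyGraph G S).dist g h : ℝ) - e ≤ (Γ.dist (g • v₀) (h • v₀) : ℝ) ∧
          (Γ.dist (g • v₀) (h • v₀) : ℝ) ≤ l * ((cayleyGraph G S).dist g h : ℝ) + e) ∧
        (∀ v : V, ∃ g : G, (Γ.dist v (g • v₀) : ℝ) ≤ e) := by
  obtain ⟨b⟩ := hconn.nonempty
  obtain ⟨S, D, hcay, hupper, hlower, hdense⟩ :=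
    hconn.exists_cayleyGraph_orbit_bounds hact hpd hcocompact b
  refine ⟨S, closure_eq_top_of_connected_cayleyGraph hcay, fun v₀ => ?_⟩
  have hbv₀ (g h : G) := hconn.dist_smul_smul_le_add hact g h b v₀
  have hv₀b (g h : G) := hconn.dist_smul_smul_le_add hact g h v₀ b
  rw [dist_comm] at hv₀b
  refine ⟨2 * D + 1, 2 * Γ.dist b v₀ + D + 1, by linarith [D.cast_nonneg (α := ℝ)], by positivity,
    fun g h => ⟨?_, ?_⟩, fun v => ?_⟩
  · have hshrink : 1 / (2 * D + 1 : ℝ) * (cayleyGraph G S).dist g h ≤ (cayleyGraph G S).dist g h :=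
      mul_le_of_le_one_left (Nat.cast_nonneg _) ((div_le_one (by positivity)).2 (by simp))
    have hnat := (hupper g h).trans (add_le_add_left (hbv₀ g h) 1)
    rify at hnat
    linarith
  · have hnat := (hv₀b g h).trans (add_le_add_left (hlower g h) _)
    rify at hnat
    linarith
  · obtain ⟨g, hg⟩ := hdense v
    have hnat := hconn.dist_triangle (u := v) (v := g • b) (w := g • v₀)
    rw [hconn.dist_smul hact] at hnat
    rify at hg hnat
    exact ⟨g, by linarith⟩

/-- Švarc–Milnor for graphs: if a group `G` acts by automorphisms on a
connected locally finite graph `Γ`, properly discontinuously and with finitely many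
vertex orbits, then `G` is finitely generated, and for every base vertex `v₀` the
orbit map `g ↦ g • v₀` is a quasi-isometry from a word metric of `G` to `Γ`. -/
theorem stmt_8 {V : Type*} (Γ : SimpleGraph V) (hconn : Γ.Connected)
    (hlf : Γ.LocallyFinite)
    (G : Type*) [Group G] [MulAction G V]
    (hact : ∀ (g : G) (u v : V), Γ.Adj u v → Γ.Adj (g • u) (g • v))
    (hpd : ∀ (v : V) (r : ℕ), {g : G | Γ.dist v (g • v) ≤ r}.Finite)
    (hcocompact : Finite (Quotient (MulAction.orbitRel G V))) :
    ∃ S : Finset G, Subgroup.closure (S : Set G) = ⊤ ∧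
      ∀ v₀ : V, ∃ l e : ℝ, 1 ≤ l ∧ 0 ≤ e ∧
        (∀ g h : G,
          (1 / l) * ((cayleyGraph G S).dist g h : ℝ) - e ≤ (Γ.dist (g • v₀) (h • v₀) : ℝ) ∧
          (Γ.dist (g • v₀) (h • v₀) : ℝ) ≤ l * ((cayleyGraph G S).dist g h : ℝ) + e) ∧
        (∀ v : V, ∃ g : G, (Γ.dist v (g • v₀) : ℝ) ≤ e) :=
  stmt_8_general Γ hconn G hact hpd hcocompact
end

section
/- In the group G presented by ⟨a, b, c, r, s, t | (rs)², (st)³, (rt)⁶, (ab)², (bc)³, (ac)⁶, bc = st⟩, the subgroup generated by st has order exactly 3, and G is isomorphic to the amalgamated free product H ∗_C H where H is the (2,3,6)-triangle group ⟨r, s, t | (rs)², (st)³, (rt)⁶⟩ and C = ⟨st⟩ is cyclic of order 3. -/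
/-!
`G` is presented by two copies of the presentation of `H` glued by `bc = st`, so homomorphisms
out of `G` are exactly pairs of homomorphisms out of `H` that agree on `st`: the universal
property of the pushout `H ∗_C H`. In `H`, `(st)³ = 1` and `st ≠ 1`, since `r, s ↦ 0, t ↦ 1`
defines a map `H → ℤ/3`. In `G`, `st` has the same order because the folding map `G → H`
retracts the second copy of `H`.
-/

/-- Relators of the `(2,3,6)`-triangle group `⟨r, s, t | (rs)², (st)³, (rt)⁶⟩`,
with generators indexed by `Fin 3` as `r = 0`, `s = 1`, `t = 2`. -/
def triRels : Set (FreeGroup (Fin 3)) :=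
  {(FreeGroup.of 0 * FreeGroup.of 1) ^ 2,
   (FreeGroup.of 1 * FreeGroup.of 2) ^ 3,
   (FreeGroup.of 0 * FreeGroup.of 2) ^ 6}

/-- The `(2,3,6)`-triangle group. -/
def TriangleGroup236 : Type := PresentedGroup triRels

noncomputable instance : Group TriangleGroup236 :=
  inferInstanceAs (Group (PresentedGroup triRels))

/-- Relators of `G = ⟨a, b, c, r, s, t | (rs)², (st)³, (rt)⁶, (ab)², (bc)³, (ac)⁶,
bc = st⟩`, with generators indexed by `Fin 6` as
`a = 0, b = 1, c = 2, r = 3, s = 4, t = 5`. -/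
def doubleRels : Set (FreeGroup (Fin 6)) :=
  {(FreeGroup.of 3 * FreeGroup.of 4) ^ 2,
   (FreeGroup.of 4 * FreeGroup.of 5) ^ 3,
   (FreeGroup.of 3 * FreeGroup.of 5) ^ 6,
   (FreeGroup.of 0 * FreeGroup.of 1) ^ 2,
   (FreeGroup.of 1 * FreeGroup.of 2) ^ 3,
   (FreeGroup.of 0 * FreeGroup.of 2) ^ 6,
   (FreeGroup.of 1 * FreeGroup.of 2) * (FreeGroup.of 4 * FreeGroup.of 5)⁻¹}

/-- The doubled group `G = H ∗_C H`. -/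
def DoubleGroup : Type := PresentedGroup doubleRels

noncomputable instance : Group DoubleGroup :=
  inferInstanceAs (Group (PresentedGroup doubleRels))

/-- The element `st` of the `(2,3,6)`-triangle group. -/
noncomputable def stH : TriangleGroup236 :=
  (PresentedGroup.of (rels := triRels) 1) * (PresentedGroup.of (rels := triRels) 2)

/-- The element `st` of the doubled group. -/
noncomputable def stG : DoubleGroup :=
  (PresentedGroup.of (rels := doubleRels) 4) * (PresentedGroup.of (rels := doubleRels) 5)

open PresentedGroup

theorem PresentedGroup.of_mul_of_pow_eq_one {α : Type*} {rels : Set (FreeGroup α)} {x y : α}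
    {n : ℕ} (h : (FreeGroup.of x * FreeGroup.of y) ^ n ∈ rels) :
    ((of x : PresentedGroup rels) * of y) ^ n = 1 := by
  rw [← one_of_mem h, map_pow, map_mul]; rfl

theorem MonoidHom.map_mul_pow_eq_one {G K : Type*} [Group G] [Group K] (f : G →* K) {x y : G}
    {n : ℕ} (h : (x * y) ^ n = 1) : (f x * f y) ^ n = 1 := by
  rw [← map_mul, ← map_pow, h, map_one]

namespace TriangleGroup236

variable {K : Type*} [Group K]

noncomputable def r : TriangleGroup236 := of 0
noncomputable def s : TriangleGroup236 := of 1
noncomputable def t : TriangleGroup236 := of 2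

theorem stH_eq : stH = s * t := rfl

theorem r_mul_s_sq : (r * s) ^ 2 = 1 := of_mul_of_pow_eq_one (by simp [triRels])
theorem s_mul_t_pow_three : (s * t) ^ 3 = 1 := of_mul_of_pow_eq_one (by simp [triRels])
theorem r_mul_t_pow_six : (r * t) ^ 6 = 1 := of_mul_of_pow_eq_one (by simp [triRels])

@[ext]
theorem hom_ext {φ ψ : TriangleGroup236 →* K} (hr : φ r = ψ r) (hs : φ s = ψ s)
    (ht : φ t = ψ t) : φ = ψ :=
  PresentedGroup.ext fun i => by fin_cases i; exacts [hr, hs, ht]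

noncomputable def lift (x y z : K) (hxy : (x * y) ^ 2 = 1) (hyz : (y * z) ^ 3 = 1)
    (hxz : (x * z) ^ 6 = 1) : TriangleGroup236 →* K :=
  toGroup (f := ![x, y, z]) <| by rintro _ (rfl | rfl | rfl) <;> simpa

section lift

variable {x y z : K} {hxy : (x * y) ^ 2 = 1} {hyz : (y * z) ^ 3 = 1} {hxz : (x * z) ^ 6 = 1}

@[simp] theorem lift_r : lift x y z hxy hyz hxz r = x := toGroup.of _
@[simp] theorem lift_s : lift x y z hxy hyz hxz s = y := toGroup.of _
@[simp] theorem lift_t : lift x y z hxy hyz hxz t = z := toGroup.of _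

theorem lift_stH : lift x y z hxy hyz hxz stH = y * z := by
  simp [stH_eq]

end lift

end TriangleGroup236

namespace DoubleGroup

variable {K : Type*} [Group K]

noncomputable def a : DoubleGroup := of 0
noncomputable def b : DoubleGroup := of 1
noncomputable def c : DoubleGroup := of 2
noncomputable def r : DoubleGroup := of 3
noncomputable def s : DoubleGroup := of 4
noncomputable def t : DoubleGroup := of 5

theorem a_mul_b_sq : (a * b) ^ 2 = 1 := of_mul_of_pow_eq_one (by simp [doubleRels])
theorem b_mul_c_pow_three : (b * c) ^ 3 = 1 := of_mul_of_pow_eq_one (by simp [doubleRels])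
theorem a_mul_c_pow_six : (a * c) ^ 6 = 1 := of_mul_of_pow_eq_one (by simp [doubleRels])
theorem r_mul_s_sq : (r * s) ^ 2 = 1 := of_mul_of_pow_eq_one (by simp [doubleRels])
theorem s_mul_t_pow_three : (s * t) ^ 3 = 1 := of_mul_of_pow_eq_one (by simp [doubleRels])
theorem r_mul_t_pow_six : (r * t) ^ 6 = 1 := of_mul_of_pow_eq_one (by simp [doubleRels])

theorem b_mul_c_eq_stG : b * c = stG := mk_eq_mk_of_mul_inv_mem (by simp [doubleRels])

noncomputable def inl : TriangleGroup236 →* DoubleGroup :=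
  TriangleGroup236.lift a b c a_mul_b_sq b_mul_c_pow_three a_mul_c_pow_six

noncomputable def inr : TriangleGroup236 →* DoubleGroup :=
  TriangleGroup236.lift r s t r_mul_s_sq s_mul_t_pow_three r_mul_t_pow_six

theorem inl_stH : inl stH = stG := TriangleGroup236.lift_stH.trans b_mul_c_eq_stG
theorem inr_stH : inr stH = stG := TriangleGroup236.lift_stH

noncomputable def lift (f g : TriangleGroup236 →* K) (h : f stH = g stH) : DoubleGroup →* K :=
  toGroup (f := ![f .r, f .s, f .t, g .r, g .s, g .t]) <| by
    rintro _ (rfl | rfl | rfl | rfl | rfl | rfl | rfl) <;>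
      simp only [map_pow, map_mul, map_inv, FreeGroup.lift_apply_of]
    · exact g.map_mul_pow_eq_one TriangleGroup236.r_mul_s_sq
    · exact g.map_mul_pow_eq_one TriangleGroup236.s_mul_t_pow_three
    · exact g.map_mul_pow_eq_one TriangleGroup236.r_mul_t_pow_six
    · exact f.map_mul_pow_eq_one TriangleGroup236.r_mul_s_sq
    · exact f.map_mul_pow_eq_one TriangleGroup236.s_mul_t_pow_three
    · exact f.map_mul_pow_eq_one TriangleGroup236.r_mul_t_pow_six
    · rw [mul_inv_eq_one]
      simpa [TriangleGroup236.stH_eq] using h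

section lift

variable {f g : TriangleGroup236 →* K} {h : f stH = g stH}

@[simp] theorem lift_a : lift f g h a = f .r := toGroup.of _
@[simp] theorem lift_b : lift f g h b = f .s := toGroup.of _
@[simp] theorem lift_c : lift f g h c = f .t := toGroup.of _
@[simp] theorem lift_r : lift f g h r = g .r := toGroup.of _
@[simp] theorem lift_s : lift f g h s = g .s := toGroup.of _
@[simp] theorem lift_t : lift f g h t = g .t := toGroup.of _

theorem lift_comp_inl : (lift f g h).comp inl = f := by
  ext <;> simp [inl]

theorem lift_comp_inr : (lift f g h).comp inr = g := by
  ext <;> simp [inr]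

end lift

theorem hom_ext {φ ψ : DoubleGroup →* K} (hl : φ.comp inl = ψ.comp inl)
    (hr : φ.comp inr = ψ.comp inr) : φ = ψ := by
  refine PresentedGroup.ext fun i => ?_
  fin_cases i
  exacts [DFunLike.congr_fun hl .r, DFunLike.congr_fun hl .s, DFunLike.congr_fun hl .t,
    DFunLike.congr_fun hr .r, DFunLike.congr_fun hr .s, DFunLike.congr_fun hr .t]

end DoubleGroup

theorem stH_ne_one : stH ≠ 1 := by
  let χ : TriangleGroup236 →* Multiplicative (ZMod 3) :=
    TriangleGroup236.lift 1 1 (.ofAdd 1) (by decide) (by decide) (by decide)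
  intro h
  have : χ stH = 1 := by rw [h, map_one]
  rw [TriangleGroup236.lift_stH] at this
  exact absurd this (by decide)

theorem orderOf_stH : orderOf stH = 3 :=
  orderOf_eq_prime TriangleGroup236.s_mul_t_pow_three stH_ne_one

namespace DoubleGroup

noncomputable def fold : DoubleGroup →* TriangleGroup236 := lift (.id _) (.id _) rfl

theorem fold_comp_inr : fold.comp inr = .id _ := lift_comp_inr

theorem inr_injective : Function.Injective inr :=
  Function.LeftInverse.injective (g := fold) (DFunLike.congr_fun fold_comp_inr)

local notation "incl" => fun _ : Bool => Subgroup.subtype (Subgroup.zpowers stH)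

noncomputable def toPushout : DoubleGroup →* Monoid.PushoutI incl :=
  lift (Monoid.PushoutI.of (φ := incl) false) (Monoid.PushoutI.of (φ := incl) true) <| by
    have h (i : Bool) := Monoid.PushoutI.of_apply_eq_base incl i ⟨stH, Subgroup.mem_zpowers stH⟩
    exact (h false).trans (h true).symm

theorem toPushout_comp_inl : toPushout.comp inl = Monoid.PushoutI.of (φ := incl) false :=
  lift_comp_inl

theorem toPushout_comp_inr : toPushout.comp inr = Monoid.PushoutI.of (φ := incl) true :=
  lift_comp_inr

theorem inr_comp_subtype :
    inr.comp (Subgroup.zpowers stH).subtype = inl.comp (Subgroup.zpowers stH).subtype := by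
  ext ⟨_, n, rfl⟩
  simp [inl_stH, inr_stH]

noncomputable def ofPushout : Monoid.PushoutI incl →* DoubleGroup :=
  Monoid.PushoutI.lift (fun i => bif i then inr else inl) (inl.comp (Subgroup.zpowers stH).subtype)
    (by rintro (_ | _); exacts [rfl, inr_comp_subtype])

theorem ofPushout_comp_of (i : Bool) :
    ofPushout.comp (Monoid.PushoutI.of (φ := incl) i) = bif i then inr else inl := by
  ext <;> simp [ofPushout]

noncomputable def equivPushout : DoubleGroup ≃* Monoid.PushoutI incl :=
  toPushout.toMulEquiv ofPushout
    (hom_ext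
      (by rw [MonoidHom.comp_assoc, toPushout_comp_inl, ofPushout_comp_of]; rfl)
      (by rw [MonoidHom.comp_assoc, toPushout_comp_inr, ofPushout_comp_of]; rfl))
    (Monoid.PushoutI.hom_ext_nonempty <| by
      rintro (_ | _) <;> rw [MonoidHom.comp_assoc, ofPushout_comp_of, MonoidHom.id_comp]
      exacts [toPushout_comp_inl, toPushout_comp_inr])

end DoubleGroup

theorem orderOf_stG : orderOf stG = 3 := by
  rw [← DoubleGroup.inr_stH, orderOf_injective _ DoubleGroup.inr_injective, orderOf_stH]

/-- in `G = ⟨a,b,c,r,s,t | (rs)², (st)³, (rt)⁶, (ab)², (bc)³, (ac)⁶,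
bc = st⟩`, the subgroup `⟨st⟩` has order exactly `3`, and `G` is isomorphic to the
amalgamated free product `H ∗_C H` where `H` is the `(2,3,6)`-triangle group and
`C = ⟨st⟩ ≤ H` is cyclic of order `3` (identified with itself via the identity). -/
theorem stmt_15 :
    Nat.card (Subgroup.zpowers stG) = 3 ∧
    Nat.card (Subgroup.zpowers stH) = 3 ∧
    Nonempty (DoubleGroup ≃*
      Monoid.PushoutI (fun _ : Bool => (Subgroup.zpowers stH).subtype)) :=
  ⟨by rw [Nat.card_zpowers, orderOf_stG], by rw [Nat.card_zpowers, orderOf_stH],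
    ⟨DoubleGroup.equivPushout⟩⟩
end
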